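/- arXiv:1603.08045 — 4 statements merged into one kernel-verified Lean document; each statement's English description precedes it below -/
import Mathlib

section
/- Let f:[a,b]→ℝ be concave, n a positive integer, h=(b−a)/n, and x_k = a + k·h. Then (h/2)[f(a) + 2∑_{k=1}^{n−1} f(x_k) + f(b)] ≤ ∫_a^b f(t) dt ≤ h·∑_{k=1}^{n} f((x_{k−1}+x_k)/2). -/
/-!
On a single cell `[p, q]`, pair each point `t` with its reflection `p + q - t`. Concavity gives
`f p + f q ≤ f t + f (p + q - t) ≤ 2 f ((p + q) / 2)`, and integrating over `[p, q]` (the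
reflection preserves the integral) yields the one-cell Hermite–Hadamard inequality
`(q - p) (f p + f q) / 2 ≤ ∫_p^q f ≤ (q - p) f ((p + q) / 2)`. Summing over the cells of the
uniform partition gives both bounds, the interior nodes being counted twice in the trapezoid sum.
-/

open MeasureTheory Finset Set

section OneInterval

variable {f : ℝ → ℝ} {p q t : ℝ}

theorem ConcaveOn.add_le_add_reflect (hf : ConcaveOn ℝ (Icc p q) f) (ht : t ∈ Icc p q) :
    f p + f q ≤ f t + f (p + q - t) := by
  obtain ⟨hpt, htq⟩ := ht
  rcases (hpt.trans htq).eq_or_lt with rfl | hpq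
  · obtain rfl : t = p := le_antisymm htq hpt
    simp
  have hp : p ∈ Icc p q := left_mem_Icc.2 hpq.le
  have hq : q ∈ Icc p q := right_mem_Icc.2 hpq.le
  set μ := (q - t) / (q - p)
  have hμ : 0 ≤ μ := div_nonneg (by linarith) (by linarith)
  have hμ' : 0 ≤ 1 - μ := by rw [sub_nonneg]; exact div_le_one_of_le₀ (by linarith) (by linarith)
  have hμt : μ • p + (1 - μ) • q = t := by simp only [μ, smul_eq_mul]; field_simp; ring
  have hμs : (1 - μ) • p + μ • q = p + q - t := by simp only [μ, smul_eq_mul]; field_simp; ring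
  have h₁ := hf.2 hp hq hμ hμ' (add_sub_cancel μ 1)
  have h₂ := hf.2 hp hq hμ' hμ (sub_add_cancel 1 μ)
  rw [hμt] at h₁
  rw [hμs] at h₂
  simp only [smul_eq_mul] at h₁ h₂
  linarith

theorem ConcaveOn.add_reflect_le_two_mul_midpoint (hf : ConcaveOn ℝ (Icc p q) f)
    (ht : t ∈ Icc p q) : f t + f (p + q - t) ≤ 2 * f ((p + q) / 2) := by
  have hs : p + q - t ∈ Icc p q := ⟨by linarith [ht.2], by linarith [ht.1]⟩
  have h := hf.2 ht hs (by norm_num : (0 : ℝ) ≤ 1 / 2)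
    (by norm_num : (0 : ℝ) ≤ 1 / 2) (by norm_num)
  rw [show (1 / 2 : ℝ) • t + (1 / 2 : ℝ) • (p + q - t) = (p + q) / 2 by
    simp only [smul_eq_mul]; ring] at h
  simp only [smul_eq_mul] at h
  linarith

theorem ConcaveOn.integrableOn_Icc (hf : ConcaveOn ℝ (Icc p q) f) :
    IntegrableOn f (Icc p q) := by
  rcases lt_or_ge q p with hqp | hpq
  · simp [Icc_eq_empty_of_lt hqp]
  have hp : p ∈ Icc p q := left_mem_Icc.2 hpq
  have hq : q ∈ Icc p q := right_mem_Icc.2 hpq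
  have hlower : ∀ t ∈ Icc p q, min (f p) (f q) ≤ f t := fun t ht => hf.min_le_of_mem_Icc hp hq ht
  -- the reflection of `t` also lies above `min (f p) (f q)`, which caps `f t` from above
  have hupper : ∀ t ∈ Icc p q, f t ≤ 2 * f ((p + q) / 2) - min (f p) (f q) := fun t ht => by
    have := hlower (p + q - t) ⟨by linarith [ht.2], by linarith [ht.1]⟩
    linarith [hf.add_reflect_le_two_mul_midpoint ht]
  have hmeas : AEStronglyMeasurable f (volume.restrict (Ioo p q)) := by
    refine ContinuousOn.aestronglyMeasurable ?_ measurableSet_Ioo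
    simpa using hf.continuousOn_interior
  rw [integrableOn_Icc_iff_integrableOn_Ioo]
  refine IntegrableOn.of_bound measure_Ioo_lt_top hmeas
    (|min (f p) (f q)| + |2 * f ((p + q) / 2) - min (f p) (f q)|) ?_
  refine (ae_restrict_iff' measurableSet_Ioo).2 (Filter.Eventually.of_forall fun t ht => ?_)
  have h₁ := hlower t (Ioo_subset_Icc_self ht)
  have h₂ := hupper t (Ioo_subset_Icc_self ht)
  rw [Real.norm_eq_abs, abs_le]
  constructor <;> cases abs_cases (min (f p) (f q)) <;>
    cases abs_cases (2 * f ((p + q) / 2) - min (f p) (f q)) <;> linarith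

theorem ConcaveOn.intervalIntegrable (hpq : p ≤ q) (hf : ConcaveOn ℝ (Icc p q) f) :
    IntervalIntegrable f volume p q :=
  (intervalIntegrable_iff_integrableOn_Icc_of_le hpq).2 hf.integrableOn_Icc

theorem IntervalIntegrable.comp_add_sub (hf : IntervalIntegrable f volume p q) :
    IntervalIntegrable (fun t => f (p + q - t)) volume p q := by
  simpa using (hf.comp_sub_left (p + q)).symm

theorem intervalIntegral.integral_add_reflect (hf : IntervalIntegrable f volume p q) :
    ∫ t in p..q, (f t + f (p + q - t)) = 2 * ∫ t in p..q, f t := by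
  rw [integral_add hf hf.comp_add_sub, integral_comp_sub_left]
  simp only [add_sub_cancel_right, add_sub_cancel_left]
  ring

theorem ConcaveOn.trapezoid_le_integral (hpq : p ≤ q) (hf : ConcaveOn ℝ (Icc p q) f) :
    (q - p) / 2 * (f p + f q) ≤ ∫ t in p..q, f t := by
  have hi := hf.intervalIntegrable hpq
  have h := intervalIntegral.integral_mono_on hpq intervalIntegrable_const
    (hi.add hi.comp_add_sub) fun t ht => hf.add_le_add_reflect ht
  rw [intervalIntegral.integral_add_reflect hi, intervalIntegral.integral_const, smul_eq_mul] at h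
  linarith

theorem ConcaveOn.integral_le_midpoint (hpq : p ≤ q) (hf : ConcaveOn ℝ (Icc p q) f) :
    ∫ t in p..q, f t ≤ (q - p) * f ((p + q) / 2) := by
  have hi := hf.intervalIntegrable hpq
  have h := intervalIntegral.integral_mono_on hpq
    (hi.add hi.comp_add_sub) intervalIntegrable_const
    fun t ht => hf.add_reflect_le_two_mul_midpoint ht
  rw [intervalIntegral.integral_add_reflect hi, intervalIntegral.integral_const, smul_eq_mul] at h
  linarith
end OneInterval

section Partition

variable {f : ℝ → ℝ} {x : ℕ → ℝ} {n : ℕ}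

theorem ConcaveOn.mono_Icc_partition (hx : Monotone x) (hf : ConcaveOn ℝ (Icc (x 0) (x n)) f)
    {k : ℕ} (hk : k < n) : ConcaveOn ℝ (Icc (x k) (x (k + 1))) f :=
  hf.subset (Icc_subset_Icc (hx k.zero_le) (hx hk)) (convex_Icc _ _)

theorem ConcaveOn.sum_integral_partition (hx : Monotone x)
    (hf : ConcaveOn ℝ (Icc (x 0) (x n)) f) :
    ∑ k ∈ range n, ∫ t in x k..x (k + 1), f t = ∫ t in x 0..x n, f t :=
  intervalIntegral.sum_integral_adjacent_intervals fun k hk =>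
    (hf.mono_Icc_partition hx hk).intervalIntegrable (hx k.le_succ)

theorem ConcaveOn.sum_trapezoid_le_integral (hx : Monotone x)
    (hf : ConcaveOn ℝ (Icc (x 0) (x n)) f) :
    ∑ k ∈ range n, (x (k + 1) - x k) / 2 * (f (x k) + f (x (k + 1))) ≤
      ∫ t in x 0..x n, f t := by
  rw [← hf.sum_integral_partition hx]
  refine sum_le_sum fun k hk => ?_
  exact (hf.mono_Icc_partition hx (mem_range.1 hk)).trapezoid_le_integral (hx k.le_succ)

theorem ConcaveOn.integral_le_sum_midpoint (hx : Monotone x)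
    (hf : ConcaveOn ℝ (Icc (x 0) (x n)) f) :
    ∫ t in x 0..x n, f t ≤ ∑ k ∈ range n, (x (k + 1) - x k) * f ((x k + x (k + 1)) / 2) := by
  rw [← hf.sum_integral_partition hx]
  refine sum_le_sum fun k hk => ?_
  exact (hf.mono_Icc_partition hx (mem_range.1 hk)).integral_le_midpoint (hx k.le_succ)

end Partition

theorem Finset.sum_range_add_succ {R : Type*} [Semiring R] (g : ℕ → R) {n : ℕ} (hn : 1 ≤ n) :
    ∑ k ∈ range n, (g k + g (k + 1)) = g 0 + 2 * ∑ k ∈ Ico 1 n, g k + g n := by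
  obtain ⟨m, rfl⟩ := Nat.exists_eq_add_of_le' hn
  rw [sum_add_distrib, sum_range_succ', sum_range_succ, sum_Ico_eq_sum_range]
  simp only [add_tsub_cancel_right, add_comm 1, two_mul]
  abel

theorem generalized_hermite_hadamard_concave
    (a b : ℝ) (hab : a < b) (f : ℝ → ℝ)
    (hf : ConcaveOn ℝ (Set.Icc a b) f)
    (n : ℕ) (hn : 1 ≤ n)
    (h : ℝ) (hh : h = (b - a) / n)
    (x : ℕ → ℝ) (hx : ∀ k, x k = a + k * h) :
    h / 2 * (f a + 2 * ∑ k ∈ Finset.Ico 1 n, f (x k) + f b) ≤ (∫ t in a..b, f t) ∧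
    (∫ t in a..b, f t) ≤ h * ∑ k ∈ Finset.range n, f ((x k + x (k + 1)) / 2) := by
  have hh_pos : 0 < h := hh ▸ div_pos (sub_pos.2 hab) (by exact_mod_cast hn)
  have hx_mono : Monotone x := fun i j hij => by
    simp only [hx]; gcongr
  have hx_zero : x 0 = a := by simp [hx]
  have hx_n : x n = b := by rw [hx, hh]; field_simp; ring
  have hx_step : ∀ k, x (k + 1) - x k = h := fun k => by simp only [hx]; push_cast; ring
  rw [← hx_zero, ← hx_n] at hf ⊢
  have htrap := hf.sum_trapezoid_le_integral hx_mono
  have hmid := hf.integral_le_sum_midpoint hx_mono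
  simp only [hx_step, ← mul_sum] at htrap hmid
  rw [sum_range_add_succ (fun k => f (x k)) hn] at htrap
  exact ⟨htrap, hmid⟩
end

section
/- Let f:[a,b]→ℝ be convex and define H:[0,1]→ℝ by H(t) = (1/(b−a)) ∫_a^b f(t·x + (1−t)·(a+b)/2) dx. Then H is convex and monotone nondecreasing on [0,1], with H(0) = f((a+b)/2) = inf_{t∈[0,1]} H(t) and H(1) = (1/(b−a))∫_a^b f(x) dx = sup_{t∈[0,1]} H(t). -/
/-! With `m = (a + b) / 2`, the integrand `f (t * x + (1 - t) * m)` is convex in `t` for every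
`x`, so `H` is convex. For fixed `t` it is a convex function of `x` whose value at `x = m` is
`f m`, so the midpoint Hermite–Hadamard inequality gives `H 0 = f m ≤ H t`. A convex function on
`[0, 1]` that is minimal at `0` is nondecreasing, and this gives the remaining claims. -/

open MeasureTheory Set

lemma add_sub_mem_Icc {a b x : ℝ} (hx : x ∈ Icc a b) : a + b - x ∈ Icc a b :=
  ⟨by linarith [hx.2], by linarith [hx.1]⟩

namespace ConvexOn

variable {a b : ℝ} {f : ℝ → ℝ}

theorem two_mul_midpoint_le (hf : ConvexOn ℝ (Icc a b) f) {x : ℝ} (hx : x ∈ Icc a b) :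
    2 * f ((a + b) / 2) ≤ f x + f (a + b - x) := by
  have h := hf.2 hx (add_sub_mem_Icc hx) (by norm_num : (0 : ℝ) ≤ 1 / 2)
    (by norm_num : (0 : ℝ) ≤ 1 / 2) (by norm_num)
  simp only [smul_eq_mul] at h
  rw [show 1 / 2 * x + 1 / 2 * (a + b - x) = (a + b) / 2 by ring] at h
  linarith

theorem intervalIntegrable (hf : ConvexOn ℝ (Icc a b) f) (hab : a ≤ b) :
    IntervalIntegrable f volume a b := by
  set M := max (f a) (f b)
  have hle : ∀ x ∈ Icc a b, f x ≤ M := fun x hx =>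
    hf.le_max_of_mem_Icc (left_mem_Icc.2 hab) (right_mem_Icc.2 hab) hx
  have hge : ∀ x ∈ Icc a b, 2 * f ((a + b) / 2) - M ≤ f x := fun x hx => by
    linarith [hf.two_mul_midpoint_le hx, hle _ (add_sub_mem_Icc hx)]
  have hcont : ContinuousOn f (Ioo a b) := interior_Icc (a := a) ▸ hf.continuousOn_interior
  rw [intervalIntegrable_iff_integrableOn_Ioo_of_le hab]
  refine .of_bound measure_Ioo_lt_top (hcont.aestronglyMeasurable measurableSet_Ioo)
    (max |2 * f ((a + b) / 2) - M| |M|) ?_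
  filter_upwards [ae_restrict_mem measurableSet_Ioo] with x hx
  exact abs_le_max_abs_abs (hge x (Ioo_subset_Icc_self hx)) (hle x (Ioo_subset_Icc_self hx))

theorem mul_midpoint_le_intervalIntegral (hf : ConvexOn ℝ (Icc a b) f) (hab : a ≤ b) :
    (b - a) * f ((a + b) / 2) ≤ ∫ x in a..b, f x := by
  have hi := hf.intervalIntegrable hab
  have hi' : IntervalIntegrable (fun x => f (a + b - x)) volume a b := by
    simpa using (hi.comp_sub_left (a + b)).symm
  have hrefl : ∫ x in a..b, f (a + b - x) = ∫ x in a..b, f x := by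
    rw [intervalIntegral.integral_comp_sub_left, add_sub_cancel_right, add_sub_cancel_left]
  have h := intervalIntegral.integral_mono_on hab intervalIntegrable_const (hi.add hi')
    fun x hx => hf.two_mul_midpoint_le hx
  rw [intervalIntegral.integral_const, intervalIntegral.integral_add hi hi', hrefl,
    smul_eq_mul] at h
  linarith

theorem comp_mul_add {s t : Set ℝ} (hf : ConvexOn ℝ s f) (ht : Convex ℝ t) {c d : ℝ}
    (hmaps : MapsTo (fun x => c * x + d) t s) : ConvexOn ℝ t fun x => f (c * x + d) :=
  (hf.comp_affineMap (c • AffineMap.id ℝ ℝ + AffineMap.const ℝ ℝ d)).subset hmaps ht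

theorem monotoneOn_of_isMinOn_left (hf : ConvexOn ℝ (Icc a b) f) (hmin : IsMinOn f (Icc a b) a) :
    MonotoneOn f (Icc a b) := fun _ hx _ hy hxy =>
  (hf.le_max_of_mem_Icc (left_mem_Icc.2 (hx.1.trans hx.2)) hy ⟨hx.1, hxy⟩).trans
    (max_le (hmin hy) le_rfl)

end ConvexOn

theorem convexOn_intervalIntegral {E : Type*} [AddCommGroup E] [Module ℝ E] {s : Set E}
    {a b : ℝ} (hab : a ≤ b) (hs : Convex ℝ s) {F : E → ℝ → ℝ}
    (hF : ∀ x ∈ Icc a b, ConvexOn ℝ s fun t => F t x)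
    (hint : ∀ t ∈ s, IntervalIntegrable (F t) volume a b) :
    ConvexOn ℝ s fun t => ∫ x in a..b, F t x := by
  refine ⟨hs, fun t ht u hu α β hα hβ hαβ => ?_⟩
  simp only [smul_eq_mul]
  have hsum := ((hint t ht).const_mul α).add ((hint u hu).const_mul β)
  calc ∫ x in a..b, F (α • t + β • u) x
      ≤ ∫ x in a..b, (α * F t x + β * F u x) :=
        intervalIntegral.integral_mono_on hab (hint _ (hs ht hu hα hβ hαβ)) hsum
          fun x hx => (hF x hx).2 ht hu hα hβ hαβ
    _ = (α * ∫ x in a..b, F t x) + β * ∫ x in a..b, F u x := by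
        rw [intervalIntegral.integral_add ((hint t ht).const_mul α) ((hint u hu).const_mul β),
          intervalIntegral.integral_const_mul, intervalIntegral.integral_const_mul]

theorem dragomir_H_mapping
    (a b : ℝ) (hab : a < b) (f : ℝ → ℝ)
    (hf : ConvexOn ℝ (Set.Icc a b) f)
    (H : ℝ → ℝ)
    (hH : ∀ t, H t = (1 / (b - a)) * ∫ x in a..b, f (t * x + (1 - t) * ((a + b) / 2))) :
    ConvexOn ℝ (Set.Icc (0 : ℝ) 1) H ∧
    MonotoneOn H (Set.Icc (0 : ℝ) 1) ∧
    H 0 = f ((a + b) / 2) ∧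
    H 1 = (1 / (b - a)) * ∫ x in a..b, f x ∧
    (∀ t ∈ Set.Icc (0 : ℝ) 1, H 0 ≤ H t) ∧
    (∀ t ∈ Set.Icc (0 : ℝ) 1, H t ≤ H 1) := by
  set m := (a + b) / 2 with hm_def
  have hm : m ∈ Icc a b := ⟨by linarith, by linarith⟩
  have hmem : ∀ t ∈ Icc (0 : ℝ) 1, ∀ x ∈ Icc a b, t * x + (1 - t) * m ∈ Icc a b :=
    fun t ht x hx => convex_Icc a b hx hm ht.1 (sub_nonneg.2 ht.2) (add_sub_cancel _ _)
  have hconv_x : ∀ t ∈ Icc (0 : ℝ) 1, ConvexOn ℝ (Icc a b) fun x => f (t * x + (1 - t) * m) :=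
    fun t ht => hf.comp_mul_add (convex_Icc a b) (hmem t ht)
  have hconv_t : ∀ x ∈ Icc a b, ConvexOn ℝ (Icc (0 : ℝ) 1) fun t => f (t * x + (1 - t) * m) :=
    fun x hx => (hf.comp_mul_add (c := x - m) (d := m) (convex_Icc 0 1)
      fun t ht => by convert hmem t ht x hx using 1; ring).congr fun t _ => by ring_nf
  have hconv : ConvexOn ℝ (Icc (0 : ℝ) 1) H := by
    rw [funext hH]
    exact (convexOn_intervalIntegral hab.le (convex_Icc 0 1) hconv_t
      fun t ht => (hconv_x t ht).intervalIntegrable hab.le).smul (by positivity)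
  have hH0 : H 0 = f m := by simp [hH, sub_ne_zero.2 hab.ne']
  have hmin : IsMinOn H (Icc 0 1) 0 := fun t ht => by
    have h := (hconv_x t ht).mul_midpoint_le_intervalIntegral hab.le
    rw [← hm_def, show t * m + (1 - t) * m = m by ring] at h
    show H 0 ≤ H t
    rw [hH0, hH t, one_div, inv_mul_eq_div, le_div_iff₀' (sub_pos.2 hab)]
    exact h
  have hmono := hconv.monotoneOn_of_isMinOn_left hmin
  exact ⟨hconv, hmono, hH0, by simp [hH], hmin,
    fun t ht => hmono ht (right_mem_Icc.2 zero_le_one) ht.2⟩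
end

section
/- Let f:[a,b]→ℝ be convex, n∈ℕ, n≥1, h=(b−a)/n, x_k = a+k·h, and define H:[0,1]→ℝ by H(t) = ∑_{j=1}^{n} (1/h)∫_{x_{j−1}}^{x_j} f(t·u + (1−t)·(x_{j−1}+x_j)/2) du. Then H is convex and nondecreasing on [0,1], inf_{t∈[0,1]} H(t) = H(0) = ∑_{k=1}^{n} f((x_{k−1}+x_k)/2), and sup_{t∈[0,1]} H(t) = H(1) = (1/h)∫_a^b f(u) du. -/
/-!
Each summand of `H` is an average over `u` of `t ↦ f (t u + (1 - t) m_j)`, which is convex in `t`,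
so `H` is convex. For fixed `t`, `u ↦ f (t u + (1 - t) m_j)` is convex and takes the value
`f m_j` at the midpoint `m_j`, so the left Hermite–Hadamard inequality (pair `u` with its mirror
image `x_j + x_{j+1} - u`) gives `H 0 ≤ H t`. A convex function on `[0, 1]` that is minimal at `0`
is nondecreasing, and `H 1` is the sum of the integrals over adjacent intervals.
-/

open MeasureTheory Finset

theorem ConvexOn.finsetSum {𝕜 E β ι : Type*} [Semiring 𝕜] [PartialOrder 𝕜] [AddCommMonoid E]
    [AddCommMonoid β] [PartialOrder β] [IsOrderedAddMonoid β] [SMul 𝕜 E] [Module 𝕜 β]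
    {s : Set E} {t : Finset ι} {g : ι → E → β} (hs : Convex 𝕜 s)
    (hg : ∀ i ∈ t, ConvexOn 𝕜 s (g i)) : ConvexOn 𝕜 s fun x => ∑ i ∈ t, g i x := by
  classical
  induction t using Finset.induction_on with
  | empty => simpa using convexOn_const (0 : β) hs
  | insert i t hi ih =>
    simp_rw [sum_insert hi]
    exact (hg i (mem_insert_self i t)).add (ih fun j hj => hg j (mem_insert_of_mem hj))

theorem ConvexOn.monotoneOn_of_left_le {𝕜 : Type*} [Field 𝕜] [LinearOrder 𝕜]
    [IsStrictOrderedRing 𝕜] {p q : 𝕜} {g : 𝕜 → 𝕜} (hg : ConvexOn 𝕜 (Set.Icc p q) g)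
    (hleft : ∀ t ∈ Set.Icc p q, g p ≤ g t) : MonotoneOn g (Set.Icc p q) := by
  intro s hs t ht hst
  rcases hs.1.eq_or_lt with rfl | hps
  · exact hleft t ht
  rcases hst.eq_or_lt with rfl | hst
  · rfl
  have hslope := hg.slope_mono_adjacent (Set.left_mem_Icc.2 (hps.le.trans hs.2)) ht hps hst
  have hleft_slope : 0 ≤ (g s - g p) / (s - p) :=
    div_nonneg (sub_nonneg.2 (hleft s hs)) (sub_pos.2 hps).le
  have := (le_div_iff₀ (sub_pos.2 hst)).1 (hleft_slope.trans hslope)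
  linarith

theorem ConvexOn.comp_mul_add_s17 {s T : Set ℝ} {f : ℝ → ℝ} (hf : ConvexOn ℝ s f) (α β : ℝ)
    (hT : Convex ℝ T) (hmaps : Set.MapsTo (fun u => α * u + β) T s) :
    ConvexOn ℝ T fun u => f (α * u + β) := by
  have := hf.comp_affineMap ((α • LinearMap.id : ℝ →ₗ[ℝ] ℝ).toAffineMap + AffineMap.const ℝ ℝ β)
  exact this.subset hmaps hT

section Interval

variable {c d : ℝ}

theorem mul_add_one_sub_mul_mem_Icc {u v t : ℝ} (hu : u ∈ Set.Icc c d) (hv : v ∈ Set.Icc c d)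
    (ht : t ∈ Set.Icc (0 : ℝ) 1) : t * u + (1 - t) * v ∈ Set.Icc c d := by
  simpa only [smul_eq_mul] using
    convex_Icc c d hu hv ht.1 (sub_nonneg.2 ht.2) (add_sub_cancel t 1)

theorem add_div_two_mem_Icc (hcd : c ≤ d) : (c + d) / 2 ∈ Set.Icc c d :=
  ⟨by linarith, by linarith⟩

theorem add_sub_mem_Icc_s17 {u : ℝ} (hu : u ∈ Set.Icc c d) : c + d - u ∈ Set.Icc c d :=
  ⟨by linarith [hu.2], by linarith [hu.1]⟩

variable {g : ℝ → ℝ}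

theorem ConvexOn.two_mul_map_midpoint_le (hg : ConvexOn ℝ (Set.Icc c d) g) {u : ℝ}
    (hu : u ∈ Set.Icc c d) : 2 * g ((c + d) / 2) ≤ g u + g (c + d - u) := by
  have := hg.2 hu (add_sub_mem_Icc_s17 hu) (by norm_num : (0 : ℝ) ≤ 1 / 2)
    (by norm_num : (0 : ℝ) ≤ 1 / 2) (by norm_num)
  simp only [smul_eq_mul] at this
  rw [show 1 / 2 * u + 1 / 2 * (c + d - u) = (c + d) / 2 by ring] at this
  linarith

theorem ConvexOn.intervalIntegrable_s17 (hcd : c ≤ d) (hg : ConvexOn ℝ (Set.Icc c d) g) :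
    IntervalIntegrable g volume c d := by
  set M := max (g c) (g d)
  have hupper : ∀ u ∈ Set.Icc c d, g u ≤ M := fun u hu =>
    hg.le_on_segment (Set.left_mem_Icc.2 hcd) (Set.right_mem_Icc.2 hcd) (segment_eq_Icc hcd ▸ hu)
  have hlower : ∀ u ∈ Set.Icc c d, 2 * g ((c + d) / 2) - M ≤ g u := fun u hu => by
    linarith [hg.two_mul_map_midpoint_le hu, hupper _ (add_sub_mem_Icc_s17 hu)]
  have hcont : ContinuousOn g (Set.Ioo c d) :=
    (hg.subset Set.Ioo_subset_Icc_self (convex_Ioo c d)).continuousOn isOpen_Ioo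
  rw [intervalIntegrable_iff_integrableOn_Ioo_of_le hcd]
  refine ⟨hcont.aestronglyMeasurable measurableSet_Ioo,
    HasFiniteIntegral.restrict_of_bounded (C := max |2 * g ((c + d) / 2) - M| |M|)
      measure_Ioo_lt_top ?_⟩
  filter_upwards [ae_restrict_mem measurableSet_Ioo] with u hu
  exact abs_le_max_abs_abs (hlower u (Set.Ioo_subset_Icc_self hu))
    (hupper u (Set.Ioo_subset_Icc_self hu))

/-- The left Hermite–Hadamard inequality. -/
theorem ConvexOn.mul_map_midpoint_le_integral (hcd : c ≤ d) (hg : ConvexOn ℝ (Set.Icc c d) g) :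
    (d - c) * g ((c + d) / 2) ≤ ∫ u in c..d, g u := by
  have hint := hg.intervalIntegrable_s17 hcd
  have hint_refl : IntervalIntegrable (fun u => g (c + d - u)) volume c d := by
    simpa using (hint.comp_sub_left (c + d)).symm
  have hrefl : ∫ u in c..d, g (c + d - u) = ∫ u in c..d, g u := by
    simp [intervalIntegral.integral_comp_sub_left]
  have hsum : ∫ _ in c..d, 2 * g ((c + d) / 2) ≤ ∫ u in c..d, (g u + g (c + d - u)) :=
    intervalIntegral.integral_mono_on hcd intervalIntegrable_const (hint.add hint_refl)
      fun u hu => hg.two_mul_map_midpoint_le hu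
  rw [intervalIntegral.integral_const, intervalIntegral.integral_add hint hint_refl, hrefl,
    smul_eq_mul] at hsum
  linarith

end Interval

/-- The mapping `H_j` of the paper, on the subinterval `[c, d] = [x_{j-1}, x_j]`. -/
noncomputable def dragomirMap (f : ℝ → ℝ) (c d t : ℝ) : ℝ :=
  1 / (d - c) * ∫ u in c..d, f (t * u + (1 - t) * ((c + d) / 2))

section Dragomir

variable {f : ℝ → ℝ} {c d : ℝ}

theorem ConvexOn.convexOn_dragomir_integrand (hcd : c ≤ d) (hf : ConvexOn ℝ (Set.Icc c d) f)
    {t : ℝ} (ht : t ∈ Set.Icc (0 : ℝ) 1) :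
    ConvexOn ℝ (Set.Icc c d) fun u => f (t * u + (1 - t) * ((c + d) / 2)) :=
  hf.comp_mul_add_s17 t _ (convex_Icc c d) fun _ hu =>
    mul_add_one_sub_mul_mem_Icc hu (add_div_two_mem_Icc hcd) ht

theorem dragomirMap_zero (hcd : c < d) : dragomirMap f c d 0 = f ((c + d) / 2) := by
  simp only [dragomirMap, zero_mul, sub_zero, one_mul, zero_add, intervalIntegral.integral_const,
    smul_eq_mul]
  field_simp [(sub_pos.2 hcd).ne']

theorem convexOn_dragomirMap (hcd : c ≤ d) (hf : ConvexOn ℝ (Set.Icc c d) f) :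
    ConvexOn ℝ (Set.Icc (0 : ℝ) 1) (dragomirMap f c d) := by
  refine ConvexOn.smul (c := 1 / (d - c)) (by simpa using hcd) ?_
  simp_rw [intervalIntegral.integral_of_le hcd]
  refine integral_convexOn_of_integrand_ae (convex_Icc 0 1) ?_
    fun t ht => ((hf.convexOn_dragomir_integrand hcd ht).intervalIntegrable_s17 hcd).1
  filter_upwards [ae_restrict_mem measurableSet_Ioc] with u hu
  have hline : ∀ t, t * u + (1 - t) * ((c + d) / 2) = (u - (c + d) / 2) * t + (c + d) / 2 :=
    fun t => by ring
  simp_rw [hline]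
  refine hf.comp_mul_add_s17 _ _ (convex_Icc 0 1) fun t ht => ?_
  dsimp only
  rw [← hline]
  exact mul_add_one_sub_mul_mem_Icc (Set.Ioc_subset_Icc_self hu) (add_div_two_mem_Icc hcd) ht

theorem map_midpoint_le_dragomirMap (hcd : c < d) (hf : ConvexOn ℝ (Set.Icc c d) f) {t : ℝ}
    (ht : t ∈ Set.Icc (0 : ℝ) 1) : f ((c + d) / 2) ≤ dragomirMap f c d t := by
  have := (hf.convexOn_dragomir_integrand hcd.le ht).mul_map_midpoint_le_integral hcd.le
  rw [show t * ((c + d) / 2) + (1 - t) * ((c + d) / 2) = (c + d) / 2 by ring] at this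
  rwa [dragomirMap, one_div, le_inv_mul_iff₀ (sub_pos.2 hcd)]

end Dragomir

theorem composite_H_mapping
    (a b : ℝ) (hab : a < b) (f : ℝ → ℝ)
    (hf : ConvexOn ℝ (Set.Icc a b) f)
    (n : ℕ) (hn : 1 ≤ n)
    (h : ℝ) (hh : h = (b - a) / n)
    (x : ℕ → ℝ) (hx : ∀ k, x k = a + k * h)
    (H : ℝ → ℝ)
    (hH : ∀ t, H t = ∑ j ∈ Finset.range n,
      (1 / h) * ∫ u in (x j)..(x (j + 1)), f (t * u + (1 - t) * ((x j + x (j + 1)) / 2))) :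
    ConvexOn ℝ (Set.Icc (0 : ℝ) 1) H ∧
    MonotoneOn H (Set.Icc (0 : ℝ) 1) ∧
    H 0 = ∑ k ∈ Finset.range n, f ((x k + x (k + 1)) / 2) ∧
    H 1 = (1 / h) * ∫ u in a..b, f u ∧
    (∀ t ∈ Set.Icc (0 : ℝ) 1, H 0 ≤ H t) ∧
    (∀ t ∈ Set.Icc (0 : ℝ) 1, H t ≤ H 1) := by
  have hh_pos : 0 < h := hh ▸ div_pos (sub_pos.2 hab) (by exact_mod_cast hn)
  have hnh : (n : ℝ) * h = b - a := by
    rw [hh]; field_simp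
  have hstep : ∀ j : ℕ, x (j + 1) - x j = h := fun j => by rw [hx, hx]; push_cast; ring
  have hlt : ∀ j : ℕ, x j < x (j + 1) := fun j => by linarith [hstep j]
  have hfj : ∀ j ∈ range n, ConvexOn ℝ (Set.Icc (x j) (x (j + 1))) f := fun j hj => by
    have hjn : (j : ℝ) + 1 ≤ n := by exact_mod_cast mem_range.1 hj
    refine hf.subset (Set.Icc_subset_Icc ?_ ?_) (convex_Icc _ _)
    · rw [hx]; exact le_add_of_nonneg_right (by positivity)
    · rw [hx]; push_cast
      linarith [mul_le_mul_of_nonneg_right hjn hh_pos.le]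
  have hH_eq : H = fun t => ∑ j ∈ range n, dragomirMap f (x j) (x (j + 1)) t := by
    funext t; rw [hH]; simp only [dragomirMap, hstep]
  have hconv : ConvexOn ℝ (Set.Icc (0 : ℝ) 1) H := hH_eq ▸
    ConvexOn.finsetSum (convex_Icc 0 1) fun j hj => convexOn_dragomirMap (hlt j).le (hfj j hj)
  have hzero_le : ∀ t ∈ Set.Icc (0 : ℝ) 1, H 0 ≤ H t := fun t ht => by
    rw [hH_eq]
    exact sum_le_sum fun j hj => (dragomirMap_zero (hlt j)).trans_le
      (map_midpoint_le_dragomirMap (hlt j) (hfj j hj) ht)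
  have hmono := hconv.monotoneOn_of_left_le hzero_le
  refine ⟨hconv, hmono, ?_, ?_, hzero_le, fun t ht => hmono ht (by simp) ht.2⟩
  · rw [hH_eq]
    exact sum_congr rfl fun j _ => dragomirMap_zero (hlt j)
  · rw [hH]
    simp only [one_mul, sub_self, zero_mul, add_zero, ← mul_sum]
    rw [intervalIntegral.sum_integral_adjacent_intervals
      fun j hj => (hfj j (mem_range.2 hj)).intervalIntegrable_s17 (hlt j).le]
    congr 2
    · simp [hx]
    · rw [hx, hnh]; ring
end

section
/- Let f:[a,b]→ℝ be convex, n∈ℕ, n≥1, h=(b−a)/n, x_k=a+k·h. Then ∑_{k=1}^{n} f((x_{k−1}+x_k)/2) − ∑_{k=1}^{n−1} f(x_k) ≤ (1/h)∫_a^b f(t) dt − ∑_{k=1}^{n−1} f(x_k) ≤ (f(a)+f(b))/2. -/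
/-!
On a cell `[c, d]` of the partition, convexity gives the pointwise bounds
`2 f((c + d)/2) ≤ f t + f (c + d - t) ≤ f c + f d`, and integrating them (the reflection
`t ↦ c + d - t` preserves the integral) yields the Hermite–Hadamard inequality
`(d - c) f((c + d)/2) ≤ ∫ f ≤ (d - c) (f c + f d)/2`. Summing over the `n` cells of width `h`,
the trapezoid sums telescope to `(f a + f b)/2 + ∑_{k=1}^{n-1} f(x_k)`. The same lower bound and
`f ≤ max (f a) (f b)` make `f` bounded, hence integrable, since it is continuous on `(a, b)`.
-/

open MeasureTheory Finset

lemma Finset.sum_range_add_succ_div_two {K : Type*} [Field K] [CharZero K] (g : ℕ → K) {n : ℕ}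
    (hn : 1 ≤ n) :
    ∑ k ∈ range n, (g k + g (k + 1)) / 2 = (g 0 + g n) / 2 + ∑ k ∈ Ico 1 n, g k := by
  induction n, hn using Nat.le_induction with
  | base => simp
  | succ m hm ih =>
    rw [sum_range_succ, ih, sum_Ico_succ_top hm]
    ring

lemma Set.add_sub_mem_Icc {a b t : ℝ} (ht : t ∈ Set.Icc a b) : a + b - t ∈ Set.Icc a b :=
  ⟨by linarith [ht.2], by linarith [ht.1]⟩

namespace ConvexOn

variable {f : ℝ → ℝ} {a b t : ℝ}

lemma two_mul_map_midpoint_le_add_reflect (hf : ConvexOn ℝ (Set.Icc a b) f)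
    (ht : t ∈ Set.Icc a b) : 2 * f ((a + b) / 2) ≤ f t + f (a + b - t) := by
  have := hf.2 ht (Set.add_sub_mem_Icc ht) (by norm_num : (0 : ℝ) ≤ 1 / 2)
    (by norm_num : (0 : ℝ) ≤ 1 / 2) (by norm_num)
  simp only [smul_eq_mul] at this
  rw [show 1 / 2 * t + 1 / 2 * (a + b - t) = (a + b) / 2 by ring] at this
  linarith

lemma add_reflect_le (hf : ConvexOn ℝ (Set.Icc a b) f) (ht : t ∈ Set.Icc a b) :
    f t + f (a + b - t) ≤ f a + f b := by
  rcases (ht.1.trans ht.2).eq_or_lt with rfl | hab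
  · obtain rfl : t = a := le_antisymm ht.2 ht.1
    simp
  have ha : a ∈ Set.Icc a b := Set.left_mem_Icc.2 hab.le
  have hb : b ∈ Set.Icc a b := Set.right_mem_Icc.2 hab.le
  -- `t` and `a + b - t` are the convex combinations of `a, b` with swapped weights `w, 1 - w`
  set w := (b - t) / (b - a) with hw
  have hw₀ : 0 ≤ w := div_nonneg (by linarith [ht.2]) (by linarith)
  have hw₁ : 0 ≤ 1 - w := by
    rw [hw, one_sub_div (by linarith : b - a ≠ 0)]
    exact div_nonneg (by linarith [ht.1]) (by linarith)
  have h₁ := hf.2 ha hb hw₀ hw₁ (by ring)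
  have h₂ := hf.2 ha hb hw₁ hw₀ (by ring)
  have e₁ : w • a + (1 - w) • b = t := by
    simp only [hw, smul_eq_mul]; field_simp; ring
  have e₂ : (1 - w) • a + w • b = a + b - t := by
    simp only [hw, smul_eq_mul]; field_simp; ring
  rw [e₁] at h₁
  rw [e₂] at h₂
  simp only [smul_eq_mul] at h₁ h₂
  linarith

lemma integrableOn_Icc (hf : ConvexOn ℝ (Set.Icc a b) f) : IntegrableOn f (Set.Icc a b) := by
  set M := max (f a) (f b)
  -- `f` is bounded above by its endpoint values and, by reflection, below by `2 f(mid) - M`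
  have hbound : ∀ t ∈ Set.Icc a b, ‖f t‖ ≤ max M (M - 2 * f ((a + b) / 2)) := by
    intro t ht
    have hab : a ≤ b := ht.1.trans ht.2
    have hupp : ∀ s ∈ Set.Icc a b, f s ≤ M := fun s hs ↦
      hf.le_max_of_mem_Icc (Set.left_mem_Icc.2 hab) (Set.right_mem_Icc.2 hab) hs
    have hlow := hf.two_mul_map_midpoint_le_add_reflect ht
    rw [Real.norm_eq_abs, abs_le]
    constructor
    · linarith [le_max_right M (M - 2 * f ((a + b) / 2)), hupp _ (Set.add_sub_mem_Icc ht)]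
    · linarith [le_max_left M (M - 2 * f ((a + b) / 2)), hupp t ht]
  have hcont : ContinuousOn f (Set.Ioo a b) := by
    simpa only [interior_Icc] using hf.continuousOn_interior
  rw [integrableOn_Icc_iff_integrableOn_Ioo]
  refine IntegrableOn.of_bound measure_Ioo_lt_top
    (hcont.aestronglyMeasurable measurableSet_Ioo) (max M (M - 2 * f ((a + b) / 2))) ?_
  filter_upwards [ae_restrict_mem measurableSet_Ioo] with t ht
  exact hbound t (Set.Ioo_subset_Icc_self ht)

lemma integral_add_reflect (hf : IntervalIntegrable f volume a b) :
    ∫ t in a..b, (f t + f (a + b - t)) = 2 * ∫ t in a..b, f t := by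
  have hreflect : IntervalIntegrable (fun t ↦ f (a + b - t)) volume a b := by
    simpa using (hf.comp_sub_left (a + b)).symm
  rw [intervalIntegral.integral_add hf hreflect, intervalIntegral.integral_comp_sub_left]
  simp only [add_sub_cancel_right, add_sub_cancel_left]
  ring

theorem hermite_hadamard (hf : ConvexOn ℝ (Set.Icc a b) f) (hab : a ≤ b) :
    (b - a) * f ((a + b) / 2) ≤ ∫ t in a..b, f t ∧
      ∫ t in a..b, f t ≤ (b - a) * ((f a + f b) / 2) := by
  have hint : IntervalIntegrable f volume a b :=
    (intervalIntegrable_iff_integrableOn_Icc_of_le hab).2 hf.integrableOn_Icc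
  have hreflect : IntervalIntegrable (fun t ↦ f t + f (a + b - t)) volume a b :=
    hint.add (by simpa using (hint.comp_sub_left (a + b)).symm)
  have hsym := integral_add_reflect hint
  constructor
  · have := intervalIntegral.integral_mono_on hab intervalIntegrable_const hreflect
      fun t ht ↦ hf.two_mul_map_midpoint_le_add_reflect ht
    rw [intervalIntegral.integral_const, smul_eq_mul, hsym] at this
    linarith
  · have := intervalIntegral.integral_mono_on hab hreflect intervalIntegrable_const
      fun t ht ↦ hf.add_reflect_le ht
    rw [intervalIntegral.integral_const, smul_eq_mul, hsym] at this
    linarith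

theorem hermite_hadamard_partition {x : ℕ → ℝ} {n : ℕ} (hx : Monotone x)
    (hf : ConvexOn ℝ (Set.Icc (x 0) (x n)) f) :
    ∑ k ∈ range n, (x (k + 1) - x k) * f ((x k + x (k + 1)) / 2) ≤ ∫ t in x 0..x n, f t ∧
      ∫ t in x 0..x n, f t ≤
        ∑ k ∈ range n, (x (k + 1) - x k) * ((f (x k) + f (x (k + 1))) / 2) := by
  have hpiece : ∀ k < n, ConvexOn ℝ (Set.Icc (x k) (x (k + 1))) f := fun k hk ↦
    hf.subset (Set.Icc_subset_Icc (hx k.zero_le) (hx hk)) (convex_Icc _ _)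
  have hint : ∀ k < n, IntervalIntegrable f volume (x k) (x (k + 1)) := fun k hk ↦
    (intervalIntegrable_iff_integrableOn_Icc_of_le (hx k.le_succ)).2 (hpiece k hk).integrableOn_Icc
  rw [← intervalIntegral.sum_integral_adjacent_intervals hint]
  exact ⟨sum_le_sum fun k hk ↦ ((hpiece k (mem_range.1 hk)).hermite_hadamard (hx k.le_succ)).1,
    sum_le_sum fun k hk ↦ ((hpiece k (mem_range.1 hk)).hermite_hadamard (hx k.le_succ)).2⟩

end ConvexOn

theorem hermite_hadamard_ostrowski_form
    (a b : ℝ) (hab : a < b) (f : ℝ → ℝ)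
    (hf : ConvexOn ℝ (Set.Icc a b) f)
    (n : ℕ) (hn : 1 ≤ n)
    (h : ℝ) (hh : h = (b - a) / n)
    (x : ℕ → ℝ) (hx : ∀ k, x k = a + k * h) :
    (∑ k ∈ Finset.range n, f ((x k + x (k + 1)) / 2)) - (∑ k ∈ Finset.Ico 1 n, f (x k)) ≤
      (1 / h) * (∫ t in a..b, f t) - (∑ k ∈ Finset.Ico 1 n, f (x k)) ∧
    (1 / h) * (∫ t in a..b, f t) - (∑ k ∈ Finset.Ico 1 n, f (x k)) ≤
      (f a + f b) / 2 := by
  have hpos : 0 < h := hh ▸ div_pos (sub_pos.2 hab) (by exact_mod_cast hn)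
  have hstep : ∀ k, x (k + 1) - x k = h := fun k ↦ by rw [hx, hx]; push_cast; ring
  have hx0 : x 0 = a := by simp [hx]
  have hxn : x n = b := by rw [hx, hh]; field_simp; ring
  have hmono : Monotone x := monotone_nat_of_le_succ fun k ↦ by linarith [hstep k]
  obtain ⟨hlow, hupp⟩ := ConvexOn.hermite_hadamard_partition hmono (hx0 ▸ hxn ▸ hf)
  simp only [hstep, ← mul_sum, hx0, hxn] at hlow hupp
  rw [sum_range_add_succ_div_two _ hn, hx0, hxn] at hupp
  rw [one_div, inv_mul_eq_div]
  constructor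
  · exact sub_le_sub_right ((le_div_iff₀' hpos).2 hlow) _
  · rw [sub_le_iff_le_add, div_le_iff₀' hpos]
    linarith
end
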